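/- Let Π be a trace assignment over traces that are all of the form x·y^ω with |x| + |y| ≤ k. Then for every quantifier-free LTL-style formula ψ (over finitely many trace variables, using X, U, Boolean connectives), the set of positions j at which the shifted assignment Π[j,∞) satisfies ψ is eventually periodic with period dividing k! and threshold k; in particular, ψ is satisfied at some position iff it is satisfied at some position j < k + k!. -/

import Mathlib

/-- The trace determined by prefix `x` and period `y` (read `x·y^ω`). -/
def isLasso {AP : Type*} (t : ℕ → Set AP) (x y : List (Set AP)) : Prop :=
  ∀ n, t n = if n < x.length then x.getD n ∅ else y.getD ((n - x.length) % y.length) ∅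

/-- Quantifier-free HyperLTL formulas with atoms `a_π` (`a : α`, `π : V`). -/
inductive QF (α V : Type*)
  | atom : α → V → QF α V
  | neg : QF α V → QF α V
  | or : QF α V → QF α V → QF α V
  | next : QF α V → QF α V
  | until_ : QF α V → QF α V → QF α V

/-- Shift a trace assignment by `j`. -/
def shiftA {V β : Type*} (A : V → ℕ → Set β) (j : ℕ) : V → ℕ → Set β :=
  fun v n => A v (n + j)

/-- Semantics of quantifier-free formulas under a trace assignment. -/
def QF.sat {α V : Type*} (A : V → ℕ → Set α) : QF α V → Prop
  | atom a π => a ∈ A π 0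
  | neg φ => ¬ φ.sat A
  | or φ ψ => φ.sat A ∨ ψ.sat A
  | next φ => φ.sat (shiftA A 1)
  | until_ φ ψ => ∃ j : ℕ, ψ.sat (shiftA A j) ∧ ∀ j' < j, φ.sat (shiftA A j')

/-! A lasso `x·y^ω` with `|x| + |y| ≤ k` repeats with period `k!` from position `k` on, since
`|y|` divides `k!`. Hence so does every shift of an assignment of such traces, and satisfaction
of `ψ` at position `j` depends on the shifted assignment alone. A satisfying position `j ≥ k + k!`
can therefore be moved down by multiples of `k!` into `[k, k + k!)`. -/

theorem isLasso.apply_add_of_dvd {AP : Type*} {t : ℕ → Set AP} {x y : List (Set AP)}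
    (ht : isLasso t x y) {p n : ℕ} (hp : y.length ∣ p) (hn : x.length ≤ n) :
    t (n + p) = t n := by
  obtain ⟨c, rfl⟩ := hp
  rw [ht n, ht (n + y.length * c), if_neg (by omega), if_neg (by omega),
    show n + y.length * c - x.length = n - x.length + y.length * c by omega,
    Nat.add_mul_mod_self_left]

theorem isLasso.apply_add_factorial {AP : Type*} {t : ℕ → Set AP} {x y : List (Set AP)}
    (ht : isLasso t x y) (hy : y ≠ []) {k n : ℕ} (hk : x.length + y.length ≤ k) (hn : k ≤ n) :
    t (n + k.factorial) = t n :=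
  ht.apply_add_of_dvd (Nat.dvd_factorial (List.length_pos_iff.mpr hy) (by omega)) (by omega)

theorem shiftA_add_of_apply_add {V β : Type*} {A : V → ℕ → Set β} {N p : ℕ}
    (hA : ∀ v n, N ≤ n → A v (n + p) = A v n) {j : ℕ} (hj : N ≤ j) :
    shiftA A (j + p) = shiftA A j := by
  funext v n
  simpa only [shiftA, ← Nat.add_assoc] using hA v (n + j) (by omega)

theorem exists_lt_add_iff_of_periodic_from {P : ℕ → Prop} {N p : ℕ} (hp : 0 < p)
    (hP : ∀ j, N ≤ j → (P (j + p) ↔ P j)) :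
    (∃ j, P j) ↔ ∃ j < N + p, P j := by
  refine ⟨fun ⟨j, hj⟩ => ?_, fun ⟨j, _, hj⟩ => ⟨j, hj⟩⟩
  induction j using Nat.strong_induction_on with
  | _ j ih =>
    by_cases hlt : j < N + p
    · exact ⟨j, hlt, hj⟩
    · refine ih (j - p) (by omega) ((hP (j - p) (by omega)).mp ?_)
      rwa [Nat.sub_add_cancel (by omega)]

theorem qf_sat_eventually_periodic {α V : Type*} (k : ℕ) (A : V → ℕ → Set α)
    (hA : ∀ v : V, ∃ x y : List (Set α), y ≠ [] ∧ x.length + y.length ≤ k ∧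
      isLasso (A v) x y)
    (ψ : QF α V) :
    (∀ j, k ≤ j → (ψ.sat (shiftA A (j + Nat.factorial k)) ↔ ψ.sat (shiftA A j))) ∧
    ((∃ j, ψ.sat (shiftA A j)) ↔ ∃ j < k + Nat.factorial k, ψ.sat (shiftA A j)) := by
  have hper : ∀ v n, k ≤ n → A v (n + k.factorial) = A v n := fun v n hn => by
    obtain ⟨x, y, hy, hk, hlasso⟩ := hA v
    exact hlasso.apply_add_factorial hy hk hn
  have hsat : ∀ j, k ≤ j → (ψ.sat (shiftA A (j + k.factorial)) ↔ ψ.sat (shiftA A j)) :=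
    fun j hj => by rw [shiftA_add_of_apply_add hper hj]
  exact ⟨hsat, exists_lt_add_iff_of_periodic_from k.factorial_pos hsat⟩
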